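/- Let λ be a real number. If some derivation of the Lie algebra rh₃ = h₃ × ℝ has characteristic polynomial X²·(X² − 2λX + (λ² + 1)), then λ = 0. -/

import Mathlib

/-!
A derivation `D` of `rh₃` preserves the centre `span (e₃, z)` and, since `e₃ = ⁅e₁, e₂⁆`,
acts on `e₃` by the trace `μ` of its `span (e₁, e₂)`-block; on `z` modulo `e₃` it acts by
some scalar `v`. Both `μ` and `v` are real eigenvalues of `D` (for `v`: once `μ = 0`,
`D (D z) = v • D z`), and the only real root of `X² (X² - 2λX + λ² + 1) = X² ((X - λ)² + 1)`
is `0`. Hence `tr D = 2μ + v = 0`, whereas the trace is minus the subleading coefficient of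
the characteristic polynomial, which is `2λ`.
-/

set_option linter.unusedTactic false
set_option linter.unnecessarySeqFocus false
set_option linter.unreachableTactic false

open Polynomial

/-- The 3-dimensional Heisenberg Lie algebra `h₃`: the real vector space `Fin 3 → ℝ`
with basis `e₁, e₂, e₃` and only nonzero bracket `⁅e₁, e₂⁆ = e₃`. -/
def H3 : Type := Fin 3 → ℝ

noncomputable instance : AddCommGroup H3 := Pi.addCommGroup
noncomputable instance : Module ℝ H3 := Pi.module _ _ _
instance : FiniteDimensional ℝ H3 := inferInstanceAs (FiniteDimensional ℝ (Fin 3 → ℝ))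

lemma H3.add_apply (x y : H3) (i : Fin 3) : (x + y) i = x i + y i := rfl
lemma H3.smul_apply (r : ℝ) (x : H3) (i : Fin 3) : (r • x) i = r * x i := rfl

noncomputable instance : LieRing H3 :=
  { (inferInstance : AddCommGroup H3) with
    bracket := fun x y => ![0, 0, x 0 * y 1 - x 1 * y 0]
    add_lie := by
      intro x y z
      show (![_,_,_] : Fin 3 → ℝ) = ![_,_,_] + ![_,_,_]
      funext i
      fin_cases i <;> simp [H3.add_apply] <;> erw [H3.add_apply] <;> simp <;> ring
    lie_add := by
      intro x y z
      show (![_,_,_] : Fin 3 → ℝ) = ![_,_,_] + ![_,_,_]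
      funext i
      fin_cases i <;> simp [H3.add_apply] <;> erw [H3.add_apply] <;> simp <;> ring
    lie_self := by
      intro x
      show (![_,_,_] : Fin 3 → ℝ) = 0
      funext i
      fin_cases i <;> simp <;> ring
    leibniz_lie := by
      intro x y z
      show (![_,_,_] : Fin 3 → ℝ) = ![_,_,_] + ![_,_,_]
      funext i
      fin_cases i <;> simp [H3.add_apply] <;> erw [H3.add_apply] <;> simp <;> ring }

noncomputable instance : LieAlgebra ℝ H3 :=
  { lie_smul := by
      intro r x y
      show (![_,_,_] : Fin 3 → ℝ) = r • ![_,_,_]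
      funext i
      fin_cases i <;> simp [H3.smul_apply] <;> erw [H3.smul_apply] <;> simp <;> ring }

/-- `rh₃ := h₃ × ℝ`, the product Lie algebra of the Heisenberg Lie algebra `h₃` with the
1-dimensional abelian Lie algebra `ℝ`. -/
def RH3 : Type := H3 × ℝ

noncomputable instance : AddCommGroup RH3 := inferInstanceAs (AddCommGroup (H3 × ℝ))
noncomputable instance : Module ℝ RH3 := inferInstanceAs (Module ℝ (H3 × ℝ))
instance : FiniteDimensional ℝ RH3 := inferInstanceAs (FiniteDimensional ℝ (H3 × ℝ))

noncomputable instance : LieRing RH3 :=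
  { (inferInstance : AddCommGroup RH3) with
    bracket := fun x y => (⁅x.1, y.1⁆, 0)
    add_lie := by
      intro x y z
      show (⁅x.1 + y.1, z.1⁆, (0:ℝ)) = (⁅x.1, z.1⁆ + ⁅y.1, z.1⁆, 0 + 0)
      simp [add_lie]
    lie_add := by
      intro x y z
      show (⁅x.1, y.1 + z.1⁆, (0:ℝ)) = (⁅x.1, y.1⁆ + ⁅x.1, z.1⁆, 0 + 0)
      simp [lie_add]
    lie_self := by
      intro x
      show (⁅x.1, x.1⁆, (0:ℝ)) = (0, 0)
      simp
    leibniz_lie := by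
      intro x y z
      show (⁅x.1, ⁅y.1, z.1⁆⁆, (0:ℝ)) = (⁅⁅x.1, y.1⁆, z.1⁆ + ⁅y.1, ⁅x.1, z.1⁆⁆, 0 + 0)
      rw [← leibniz_lie]
      simp }

noncomputable instance : LieAlgebra ℝ RH3 :=
  { lie_smul := by
      intro r x y
      show (⁅x.1, r • y.1⁆, (0:ℝ)) = (r • ⁅x.1, y.1⁆, r • (0:ℝ))
      simp }


namespace LinearMap

variable {R M : Type*} [CommRing R] [AddCommGroup M] [Module R M] [Module.Free R M]
  [Module.Finite R M]

theorem trace_eq_neg_charpoly_nextCoeff (f : M →ₗ[R] M) :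
    trace R M f = -f.charpoly.nextCoeff := by
  rw [trace_eq_matrix_trace R (Module.Free.chooseBasis R M), Matrix.trace_eq_neg_charpoly_nextCoeff,
    charpoly_toMatrix]

end LinearMap

namespace Module.End

variable {K V : Type*} [Field K] [AddCommGroup V] [Module K V] [Module.Finite K V]

theorem eq_zero_of_apply_eq_smul {f : End K V} (hroots : ∀ t, f.charpoly.IsRoot t → t = 0)
    {μ : K} {x : V} (hx : x ≠ 0) (hfx : f x = μ • x) : μ = 0 :=
  hroots μ <| (hasEigenvalue_iff_isRoot_charpoly f μ).mp <|
    hasEigenvalue_of_hasEigenvector ⟨mem_eigenspace_iff.mpr hfx, hx⟩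

end Module.End

theorem eq_zero_of_isRoot_X_sq_mul {lam t : ℝ}
    (ht : (X ^ 2 * (X ^ 2 - C (2 * lam) * X + C (lam ^ 2 + 1))).IsRoot t) : t = 0 := by
  have h : t ^ 2 * ((t - lam) ^ 2 + 1) = 0 := by
    simp only [IsRoot, eval_mul, eval_add, eval_sub, eval_pow, eval_X, eval_C] at ht
    linear_combination ht
  have : (t - lam) ^ 2 + 1 ≠ 0 := by positivity
  simpa [this] using h

theorem nextCoeff_X_sq_mul (lam : ℝ) :
    (X ^ 2 * (X ^ 2 - C (2 * lam) * X + C (lam ^ 2 + 1))).nextCoeff = -(2 * lam) := by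
  have hdeg : (X ^ 2 * (X ^ 2 - C (2 * lam) * X + C (lam ^ 2 + 1)) : ℝ[X]).natDegree = 4 := by
    compute_degree!
  rw [nextCoeff, hdeg]
  simp [mul_add, mul_sub, coeff_X_pow_mul', coeff_X_pow, coeff_C, -map_pow]

theorem LieDerivation.apply_mem_center {R L : Type*} [CommRing R] [LieRing L] [LieAlgebra R L]
    (D : LieDerivation R L L) {z : L} (hz : z ∈ LieAlgebra.center R L) :
    D z ∈ LieAlgebra.center R L := by
  rw [LieModule.mem_maxTrivSubmodule] at hz ⊢
  intro x
  have h := D.apply_lie_eq_add x z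
  rw [hz x, map_zero, hz (D x), add_zero] at h
  exact h.symm

namespace RH3

noncomputable def e (i : Fin 3) : RH3 := (Pi.single i 1, 0)

noncomputable def z : RH3 := (0, 1)

@[ext]
theorem ext {x y : RH3} (h₀ : x.1 0 = y.1 0) (h₁ : x.1 1 = y.1 1) (h₂ : x.1 2 = y.1 2)
    (h : x.2 = y.2) : x = y := by
  refine Prod.ext (funext fun i => ?_) h
  fin_cases i <;> assumption

@[simp] theorem add_fst_apply (x y : RH3) (i : Fin 3) : (x + y).1 i = x.1 i + y.1 i := rfl
@[simp] theorem add_snd (x y : RH3) : (x + y).2 = x.2 + y.2 := rfl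
@[simp] theorem smul_fst_apply (r : ℝ) (x : RH3) (i : Fin 3) : (r • x).1 i = r * x.1 i := rfl
@[simp] theorem smul_snd (r : ℝ) (x : RH3) : (r • x).2 = r * x.2 := rfl
@[simp] theorem zero_fst_apply (i : Fin 3) : (0 : RH3).1 i = 0 := rfl
@[simp] theorem zero_snd : (0 : RH3).2 = 0 := rfl

@[simp] theorem lie_fst (x y : RH3) :
    ⁅x, y⁆.1 = ![0, 0, x.1 0 * y.1 1 - x.1 1 * y.1 0] := rfl
@[simp] theorem lie_snd (x y : RH3) : ⁅x, y⁆.2 = 0 := rfl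

@[simp] theorem e_fst_apply (i j : Fin 3) : (e i).1 j = if j = i then 1 else 0 := by
  simp [e, Pi.single_apply]
@[simp] theorem e_snd (i : Fin 3) : (e i).2 = 0 := rfl
@[simp] theorem z_fst_apply (i : Fin 3) : z.1 i = 0 := rfl
@[simp] theorem z_snd : z.2 = 1 := rfl

theorem z_mem_center : z ∈ LieAlgebra.center ℝ RH3 := by
  rw [LieModule.mem_maxTrivSubmodule]
  intro x
  ext <;> simp

theorem lie_e_zero_e_one : ⁅e 0, e 1⁆ = e 2 := by
  ext <;> simp

theorem e_ne_zero (i : Fin 3) : e i ≠ 0 := fun h => by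
  simpa using congrArg (fun x : RH3 => x.1 i) h

noncomputable def basis : Module.Basis (Fin 3 ⊕ Unit) ℝ RH3 :=
  (Pi.basisFun ℝ (Fin 3)).prod (Module.Basis.singleton Unit ℝ)

theorem basis_repr_inl (x : RH3) (i : Fin 3) : basis.repr x (Sum.inl i) = x.1 i :=
  (Module.Basis.prod_repr_inl _ _ x i).trans (Pi.basisFun_repr ℝ (Fin 3) x.1 i)

theorem basis_repr_inr (x : RH3) : basis.repr x (Sum.inr ()) = x.2 :=
  (Module.Basis.prod_repr_inr _ _ x ()).trans (Module.Basis.singleton_repr Unit ℝ x.2 ())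

theorem basis_inl (i : Fin 3) : basis (Sum.inl i) = e i :=
  Prod.ext
    (((Pi.basisFun ℝ (Fin 3)).prod_apply_inl_fst (.singleton Unit ℝ) i).trans
      (Pi.basisFun_apply ℝ (Fin 3) i))
    ((Pi.basisFun ℝ (Fin 3)).prod_apply_inl_snd (.singleton Unit ℝ) i)

theorem basis_inr : basis (Sum.inr ()) = z :=
  Prod.ext
    ((Pi.basisFun ℝ (Fin 3)).prod_apply_inr_fst (.singleton Unit ℝ) ())
    (((Pi.basisFun ℝ (Fin 3)).prod_apply_inr_snd (.singleton Unit ℝ) ()).trans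
      (Module.Basis.singleton_apply Unit ℝ ()))

theorem trace_eq_sum_diag (f : Module.End ℝ RH3) :
    LinearMap.trace ℝ RH3 f = (f (e 0)).1 0 + (f (e 1)).1 1 + (f (e 2)).1 2 + (f z).2 := by
  simp only [LinearMap.trace_eq_matrix_trace ℝ basis, Matrix.trace, Matrix.diag,
    LinearMap.toMatrix_apply, Fintype.sum_sum_type, Fin.sum_univ_three, Fintype.univ_unit,
    Finset.sum_singleton, basis_inl, basis_inr, basis_repr_inl, basis_repr_inr]

theorem derivation_apply_e_two (D : LieDerivation ℝ RH3 RH3) :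
    D (e 2) = ((D (e 0)).1 0 + (D (e 1)).1 1) • e 2 := by
  rw [← lie_e_zero_e_one, D.apply_lie_eq_add]
  ext <;> simp; ring

theorem derivation_apply_z (D : LieDerivation ℝ RH3 RH3) :
    D z = (D z).1 2 • e 2 + (D z).2 • z := by
  have hc := LieModule.mem_maxTrivSubmodule ℝ RH3 RH3 _ |>.mp (D.apply_mem_center z_mem_center)
  have h₀ : (D z).1 0 = 0 := by simpa using congrArg (fun w : RH3 => w.1 2) (hc (e 1))
  have h₁ : (D z).1 1 = 0 := by simpa using congrArg (fun w : RH3 => w.1 2) (hc (e 0))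
  ext <;> simp [h₀, h₁]

theorem derivation_apply_apply_z (D : LieDerivation ℝ RH3 RH3) (h : D (e 2) = 0) :
    D (D z) = (D z).2 • D z := by
  conv_lhs => rw [derivation_apply_z D]
  rw [map_add, map_smul, map_smul, h, smul_zero, zero_add]

end RH3

/-- If some derivation of `rh₃ = h₃ × ℝ` has characteristic polynomial
`X² * (X² - 2λX + (λ² + 1))`, then `λ = 0`. -/
theorem charpoly_derivation_rh3_complex_eigenvalues (lam : ℝ)
    (h : ∃ D : LieDerivation ℝ RH3 RH3,
      LinearMap.charpoly D.toLinearMap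
        = X ^ 2 * (X ^ 2 - C (2 * lam) * X + C (lam ^ 2 + 1))) :
    lam = 0 := by
  obtain ⟨D, hD⟩ := h
  have hroots : ∀ t, D.toLinearMap.charpoly.IsRoot t → t = 0 := fun t ht =>
    eq_zero_of_isRoot_X_sq_mul (hD ▸ ht)
  have hμ : (D (RH3.e 0)).1 0 + (D (RH3.e 1)).1 1 = 0 :=
    Module.End.eq_zero_of_apply_eq_smul hroots (RH3.e_ne_zero 2) (RH3.derivation_apply_e_two D)
  have he₂ : D (RH3.e 2) = 0 := by rw [RH3.derivation_apply_e_two, hμ, zero_smul]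
  have hv : (D RH3.z).2 = 0 := by
    by_contra hv
    have hDz : D RH3.z ≠ 0 := fun h0 => hv (by rw [h0, RH3.zero_snd])
    exact hv (Module.End.eq_zero_of_apply_eq_smul hroots hDz (RH3.derivation_apply_apply_z D he₂))
  have htrace := LinearMap.trace_eq_neg_charpoly_nextCoeff D.toLinearMap
  rw [hD, nextCoeff_X_sq_mul, RH3.trace_eq_sum_diag] at htrace
  simp only [LieDerivation.coeFn_coe, he₂, RH3.zero_fst_apply, hv] at htrace
  linarith
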